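/- Microscopic two-body Nash equilibria are non-unique: in ℝ, with positions q₁ < q₂ = q₁ + 2r (contact), desired velocities U₁ = 1, U₂ = 0, and feasible cone C = {(v₁, v₂) : v₂ − v₁ ≥ 0}, every pair (α, α) with α ∈ [0,1] is a Nash equilibrium, i.e. v₁ = α minimizes |v − 1|² over {v ≤ α} and v₂ = α minimizes |v|² over {v ≥ α}; whereas the global projection P_C(1, 0) equals (1/2, 1/2). -/

import Mathlib

noncomputable section

/-- `ℝ²` with the Euclidean norm. -/
abbrev E2 := WithLp 2 (ℝ × ℝ)

def mk2 (a b : ℝ) : E2 := (WithLp.equiv 2 (ℝ × ℝ)).symm (a, b)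

/-- Feasible velocity cone for two contacting particles on a line. -/
def feasC : Set E2 := {w | ((WithLp.equiv 2 (ℝ × ℝ)) w).1 ≤ ((WithLp.equiv 2 (ℝ × ℝ)) w).2}

/-- `p` is a metric projection of `u` onto `K`. -/
def IsProj (K : Set E2) (u p : E2) : Prop :=
  p ∈ K ∧ ∀ q ∈ K, ‖u - p‖ ≤ ‖u - q‖

lemma normsq (x : E2) : ‖x‖ ^ 2 = x.ofLp.1 ^ 2 + x.ofLp.2 ^ 2 := by
  rw [WithLp.prod_norm_sq_eq_of_L2]
  simp [Real.norm_eq_abs, sq_abs]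

lemma mk2_fst (a b : ℝ) : (mk2 a b).ofLp.1 = a := rfl
lemma mk2_snd (a b : ℝ) : (mk2 a b).ofLp.2 = b := rfl
lemma sub_fst (x y : E2) : (x - y).ofLp.1 = x.ofLp.1 - y.ofLp.1 := rfl
lemma sub_snd (x y : E2) : (x - y).ofLp.2 = x.ofLp.2 - y.ofLp.2 := rfl

/-- Non-uniqueness of microscopic two-body Nash equilibria: with desired velocities
`U₁ = 1`, `U₂ = 0` and feasible cone `{v₂ ≥ v₁}`, every `(α, α)` with `α ∈ [0,1]`
is a Nash equilibrium, while the global projection of `(1,0)` is `(1/2, 1/2)`. -/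
theorem nash_equilibria_not_unique :
    (∀ α ∈ Set.Icc (0 : ℝ) 1,
      (∀ v : ℝ, v ≤ α → |α - 1| ^ 2 ≤ |v - 1| ^ 2) ∧
      (∀ v : ℝ, α ≤ v → |α| ^ 2 ≤ |v| ^ 2)) ∧
    IsProj feasC (mk2 1 0) (mk2 (1/2) (1/2)) ∧
    (∀ p : E2, IsProj feasC (mk2 1 0) p → p = mk2 (1/2) (1/2)) := by
  refine ⟨?_, ?_, ?_⟩
  · rintro α ⟨h0, h1⟩
    constructor
    · intro v hv
      rw [sq_abs, sq_abs]; nlinarith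
    · intro v hv
      rw [sq_abs, sq_abs]; nlinarith
  · refine ⟨le_refl (1/2 : ℝ), ?_⟩
    intro q hq
    have hq' : q.ofLp.1 ≤ q.ofLp.2 := hq
    have h1 : ‖mk2 1 0 - mk2 (1/2) (1/2)‖ ^ 2 ≤ ‖mk2 1 0 - q‖ ^ 2 := by
      rw [normsq, normsq, sub_fst, sub_snd, sub_fst, sub_snd, mk2_fst, mk2_snd, mk2_fst, mk2_snd]
      nlinarith [sq_nonneg (q.ofLp.1 - 1/2), sq_nonneg (q.ofLp.2 - 1/2)]
    nlinarith [norm_nonneg (mk2 1 0 - mk2 (1/2) (1/2)), norm_nonneg (mk2 1 0 - q)]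
  · rintro p ⟨hp, hmin⟩
    have hp' : p.ofLp.1 ≤ p.ofLp.2 := hp
    have hmem : mk2 (1/2) (1/2) ∈ feasC := le_refl (1/2 : ℝ)
    have h := hmin _ hmem
    have h2 : ‖mk2 1 0 - p‖ ^ 2 ≤ ‖mk2 1 0 - mk2 (1/2) (1/2)‖ ^ 2 := by
      nlinarith [norm_nonneg (mk2 1 0 - p), norm_nonneg (mk2 1 0 - mk2 (1/2) (1/2))]
    rw [normsq, normsq, sub_fst, sub_snd, sub_fst, sub_snd, mk2_fst, mk2_snd, mk2_fst, mk2_snd] at h2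
    have ha : p.ofLp.1 = 1/2 := by nlinarith [sq_nonneg (p.ofLp.1 - 1/2), sq_nonneg (p.ofLp.2 - 1/2)]
    have hb : p.ofLp.2 = 1/2 := by nlinarith [sq_nonneg (p.ofLp.1 - 1/2), sq_nonneg (p.ofLp.2 - 1/2)]
    have : p = WithLp.toLp 2 (p.ofLp.1, p.ofLp.2) := rfl
    rw [this, ha, hb]; rfl
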